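/- arXiv:1210.0688 — 2 statements merged into one kernel-verified Lean document; each statement's English description precedes it below -/
import Mathlib

section
/- Let a < 0 and ε ∈ ℝ. Denote by p(a+iε) and p(a) the square roots with nonnegative imaginary part of a+iε and a respectively. Then |p(a+iε) - p(a)| ≤ |ε| / (2 sqrt(-a)). -/
/-!
Write `s = √(-a)`. Both `p` and `q` lie in the closed upper half-plane, `q = i s`, and since
`Re (p²) = a` forces `Im p ≥ s`, we get `‖p + q‖ ≥ Im (p + q) ≥ 2 s`. The identity
`(p - q)(p + q) = p² - q² = i ε` then gives `‖p - q‖ ≤ |ε| / (2 s)`.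
-/

lemma norm_sub_le_norm_sq_sub_div {𝕜 : Type*} [NormedField 𝕜] {p q : 𝕜} {c : ℝ} (hc : 0 < c)
    (h : c ≤ ‖p + q‖) : ‖p - q‖ ≤ ‖p ^ 2 - q ^ 2‖ / c := by
  rw [le_div_iff₀ hc, sq_sub_sq, norm_mul, mul_comm ‖p + q‖]
  exact mul_le_mul_of_nonneg_left h (norm_nonneg _)

namespace Complex

lemma sqrt_neg_re_sq_le_im {p : ℂ} (hp : 0 ≤ p.im) : Real.sqrt (-(p ^ 2).re) ≤ p.im := by
  rw [← Real.sqrt_sq hp]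
  gcongr
  simp only [sq, mul_re]
  nlinarith [sq_nonneg p.re]

lemma im_eq_sqrt_neg_of_sq_eq_ofReal {q : ℂ} {a : ℝ} (ha : a ≤ 0) (hq : q ^ 2 = a)
    (hqI : 0 ≤ q.im) : q.im = Real.sqrt (-a) := by
  have hre : q.re ^ 2 - q.im ^ 2 = a := by simpa [sq] using congrArg re hq
  have him : q.re * q.im = 0 := by
    have := congrArg im hq
    simp only [sq, mul_im, ofReal_im] at this
    linarith
  have hq_re : q.re = 0 := by
    rcases mul_eq_zero.mp him with h | h
    · exact h
    · rw [h] at hre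
      nlinarith [sq_nonneg q.re]
  rw [← Real.sqrt_sq hqI]
  congr 1
  rw [hq_re] at hre
  linarith

end Complex

theorem stmt_5 (a : ℝ) (ha : a < 0) (ε : ℝ) (p q : ℂ)
    (hp : p ^ 2 = (a : ℂ) + Complex.I * ε) (hpI : 0 ≤ p.im)
    (hq : q ^ 2 = (a : ℂ)) (hqI : 0 ≤ q.im) :
    ‖p - q‖ ≤ |ε| / (2 * Real.sqrt (-a)) := by
  have hq_im := Complex.im_eq_sqrt_neg_of_sq_eq_ofReal ha.le hq hqI
  have hp_im : Real.sqrt (-a) ≤ p.im := by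
    simpa [hp] using Complex.sqrt_neg_re_sq_le_im hpI
  have hsum : 2 * Real.sqrt (-a) ≤ ‖p + q‖ :=
    calc 2 * Real.sqrt (-a) ≤ (p + q).im := by rw [Complex.add_im, hq_im]; linarith
      _ ≤ ‖p + q‖ := Complex.im_le_norm _
  have hdiff : ‖p ^ 2 - q ^ 2‖ = |ε| := by simp [hp, hq]
  rw [← hdiff]
  exact norm_sub_le_norm_sq_sub_div (by simp [Real.sqrt_pos, ha]) hsum
end

section
/- Let a > 0 and ε > 0. Let p(a ± iε) denote the square root of a ± iε with nonnegative imaginary part, and p(a) = sqrt(a) > 0. Then |p(a + iε) - p(a)| ≤ sqrt(ε) and |p(a - iε) + p(a)| ≤ sqrt(ε). -/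
/-!
Write `s = √a`. Since `(p - s) (p + s) = p² - a = ± iε`, we get `‖p - s‖ ‖p + s‖ = ε`, so it
suffices that `p - s` is the shorter of the two factors, i.e. that `p` makes an acute angle with
`s`. For `p² = a + iε` with `Im p ≥ 0` this holds because `2 Re p Im p = ε > 0` forces `Re p > 0`.
The root `p` of `a - iε` is reduced to this case through `-conj p`, a root of `a + iε`.
-/

open Complex ComplexConjugate

theorem norm_sub_le_norm_add_of_real_inner_nonneg {F : Type*} [NormedAddCommGroup F]
    [InnerProductSpace ℝ F] {x y : F} (h : 0 ≤ inner ℝ x y) : ‖x - y‖ ≤ ‖x + y‖ :=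
  (pow_le_pow_iff_left₀ (norm_nonneg _) (norm_nonneg _) two_ne_zero).1 <| by
    rw [norm_sub_sq_real, norm_add_sq_real]
    linarith

theorem norm_sub_sq_le_norm_sq_sub_sq {𝕜 : Type*} [NormedField 𝕜] {z w : 𝕜}
    (h : ‖z - w‖ ≤ ‖z + w‖) : ‖z - w‖ ^ 2 ≤ ‖z ^ 2 - w ^ 2‖ :=
  calc ‖z - w‖ ^ 2 ≤ ‖z - w‖ * ‖z + w‖ := by
        rw [sq]
        exact mul_le_mul_of_nonneg_left h (norm_nonneg _)
    _ = ‖z ^ 2 - w ^ 2‖ := by rw [← norm_mul, sq_sub_sq, mul_comm]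

theorem Complex.re_pos_of_im_nonneg_of_im_sq_pos {z : ℂ} (hz : 0 ≤ z.im) (h : 0 < (z ^ 2).im) :
    0 < z.re := by
  rw [sq, mul_im] at h
  nlinarith

theorem Complex.norm_sub_sqrt_le_sqrt_of_sq_eq {a ε : ℝ} (ha : 0 ≤ a) (hε : 0 < ε) {p : ℂ}
    (hp : p ^ 2 = a + I * ε) (hpI : 0 ≤ p.im) : ‖p - √a‖ ≤ √ε := by
  have hre : 0 < p.re := re_pos_of_im_nonneg_of_im_sq_pos hpI (by simpa [hp] using hε)
  have hacute : ‖p - √a‖ ≤ ‖p + √a‖ :=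
    norm_sub_le_norm_add_of_real_inner_nonneg <| by
      rw [Complex.inner]
      simpa using mul_nonneg (Real.sqrt_nonneg a) hre.le
  have hsq := norm_sub_sq_le_norm_sq_sub_sq hacute
  rw [hp, ← ofReal_pow, Real.sq_sqrt ha, add_sub_cancel_left, norm_mul, norm_I, one_mul,
    norm_real, Real.norm_of_nonneg hε.le] at hsq
  exact (Real.le_sqrt (norm_nonneg _) hε.le).2 hsq

theorem stmt_6 (a ε : ℝ) (ha : 0 < a) (hε : 0 < ε) (pplus pminus : ℂ)
    (hpp : pplus ^ 2 = (a : ℂ) + Complex.I * ε) (hppI : 0 ≤ pplus.im)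
    (hpm : pminus ^ 2 = (a : ℂ) - Complex.I * ε) (hpmI : 0 ≤ pminus.im) :
    ‖pplus - Real.sqrt a‖ ≤ Real.sqrt ε ∧
    ‖pminus + Real.sqrt a‖ ≤ Real.sqrt ε := by
  refine ⟨norm_sub_sqrt_le_sqrt_of_sq_eq ha.le hε hpp hppI, ?_⟩
  have hconj : (-conj pminus) ^ 2 = a + I * ε := by
    rw [neg_sq, ← map_pow, hpm]
    simp [conj_ofReal]
  calc ‖pminus + √a‖ = ‖-conj pminus - √a‖ := by
        rw [← neg_add', norm_neg, ← conj_ofReal, ← map_add, norm_conj, conj_ofReal]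
    _ ≤ √ε := norm_sub_sqrt_le_sqrt_of_sq_eq ha.le hε hconj (by simpa using hpmI)
end
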